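/- Let n be a positive integer and let x, y be symmetric n×n complex matrices (xᵀ = x, yᵀ = y) such that I − x xᴴ, I − xᴴ x, and I − y yᴴ are (Hermitian) positive definite and the matrices I − xᴴ y, I − y xᴴ, and I − x yᴴ are invertible. Let φ_x(y) = (I − x xᴴ)^{−1/2} (y − x) (I − xᴴ y)^{−1} (I − xᴴ x)^{1/2}. Then the matrix I − φ_x(y) · φ_x(y)ᴴ is (Hermitian) positive definite; that is, the map φ_x sends the Siegel disk into the Siegel disk. -/

import Mathlib

open Matrix
open scoped ComplexOrder

/-- The square root of a positive semidefinite matrix, as defined in the older Mathlib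
(removed from current Mathlib). -/
noncomputable def Matrix.PosSemidef.sqrt {n : Type*} [Fintype n] [DecidableEq n]
    {𝕜 : Type*} [RCLike 𝕜] {A : Matrix n n 𝕜} (hA : A.PosSemidef) : Matrix n n 𝕜 :=
  hA.1.eigenvectorUnitary.1 * diagonal ((↑) ∘ Real.sqrt ∘ hA.1.eigenvalues) *
    (star hA.1.eigenvectorUnitary : Matrix n n 𝕜)

/-!
Write `A = 1 - x xᴴ`, `C = 1 - xᴴ x`, `D = 1 - y xᴴ` and `u = y - x`. The push-through identity
`A⁻¹ = 1 + x C⁻¹ xᴴ` turns `D A⁻¹ u` and `D A⁻¹ Dᴴ` into expressions in `C⁻¹` only, giving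
`D A⁻¹ u = u C⁻¹ (1 - xᴴ y)` and `D A⁻¹ Dᴴ = (1 - y yᴴ) + u C⁻¹ uᴴ`. Eliminating `u C⁻¹ uᴴ`
between them shows `1 - φ_x(y) φ_x(y)ᴴ = M (1 - y yᴴ) Mᴴ` with `M = A^{1/2} D⁻¹`, and a
congruence by an invertible matrix preserves positive definiteness.
-/

namespace Matrix.PosSemidef

variable {n 𝕜 : Type*} [Fintype n] [DecidableEq n] [RCLike 𝕜] {A : Matrix n n 𝕜}

lemma posSemidef_sqrt (hA : A.PosSemidef) : hA.sqrt.PosSemidef := by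
  have hd : (diagonal ((RCLike.ofReal : ℝ → 𝕜) ∘ Real.sqrt ∘ hA.1.eigenvalues)).PosSemidef :=
    posSemidef_diagonal_iff.mpr fun i => by simp [Real.sqrt_nonneg]
  simpa [sqrt, Matrix.star_eq_conjTranspose] using
    hd.mul_mul_conjTranspose_same hA.1.eigenvectorUnitary.1

lemma sqrt_mul_self (hA : A.PosSemidef) : hA.sqrt * hA.sqrt = A := by
  set U : Matrix n n 𝕜 := hA.1.eigenvectorUnitary.1
  have hU : star U * U = 1 := Unitary.coe_star_mul_self _
  have hdiag : diagonal ((RCLike.ofReal : ℝ → 𝕜) ∘ Real.sqrt ∘ hA.1.eigenvalues) *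
      diagonal ((↑) ∘ Real.sqrt ∘ hA.1.eigenvalues) = diagonal ((↑) ∘ hA.1.eigenvalues) := by
    rw [diagonal_mul_diagonal]
    congr 1
    funext i
    simp [← RCLike.ofReal_mul, Real.mul_self_sqrt (hA.eigenvalues_nonneg i)]
  calc hA.sqrt * hA.sqrt
      = U * (diagonal ((↑) ∘ Real.sqrt ∘ hA.1.eigenvalues) * (star U * U) *
          diagonal ((↑) ∘ Real.sqrt ∘ hA.1.eigenvalues)) * star U := by
        simp only [sqrt, U, mul_assoc]
    _ = A := by
        rw [hU, mul_one, hdiag]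
        conv_rhs => rw [hA.1.spectral_theorem, Unitary.conjStarAlgAut_apply]

end Matrix.PosSemidef

namespace Matrix

variable {n R : Type*} [Fintype n] [DecidableEq n] [CommRing R] [StarRing R]
  (x y : Matrix n n R)

lemma inv_one_sub_mul_conjTranspose (hC : IsUnit (1 - xᴴ * x).det) :
    (1 - x * xᴴ)⁻¹ = 1 + x * (1 - xᴴ * x)⁻¹ * xᴴ := by
  refine inv_eq_right_inv ?_
  calc (1 - x * xᴴ) * (1 + x * (1 - xᴴ * x)⁻¹ * xᴴ)
      = 1 - x * xᴴ + x * ((1 - xᴴ * x) * (1 - xᴴ * x)⁻¹) * xᴴ := by noncomm_ring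
    _ = 1 := by rw [mul_nonsing_inv _ hC]; noncomm_ring

lemma one_sub_mul_conjTranspose_mul_inv_mul_sub (hC : IsUnit (1 - xᴴ * x).det) :
    (1 - y * xᴴ) * (1 - x * xᴴ)⁻¹ * (y - x) = (y - x) * (1 - xᴴ * x)⁻¹ * (1 - xᴴ * y) := by
  rw [inv_one_sub_mul_conjTranspose x hC]
  set C := 1 - xᴴ * x
  -- The terms `C * C⁻¹ - 1` and `C⁻¹ * C - 1` vanish; up to them this is a polynomial identity
  -- in `x`, `xᴴ`, `y` and `C⁻¹`.
  calc (1 - y * xᴴ) * (1 + x * C⁻¹ * xᴴ) * (y - x)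
      = (y - x) * C⁻¹ * (1 - xᴴ * y) + y * (C * C⁻¹ - 1) * (xᴴ * (y - x))
          - (y - x) * (C⁻¹ * C - 1) := by simp only [C]; noncomm_ring
    _ = (y - x) * C⁻¹ * (1 - xᴴ * y) := by
        rw [mul_nonsing_inv _ hC, nonsing_inv_mul _ hC]; noncomm_ring

lemma one_sub_mul_conjTranspose_mul_inv_mul_one_sub (hC : IsUnit (1 - xᴴ * x).det) :
    (1 - y * xᴴ) * (1 - x * xᴴ)⁻¹ * (1 - x * yᴴ)
      = 1 - y * yᴴ + (y - x) * (1 - xᴴ * x)⁻¹ * (y - x)ᴴ := by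
  rw [inv_one_sub_mul_conjTranspose x hC, conjTranspose_sub]
  set C := 1 - xᴴ * x
  calc (1 - y * xᴴ) * (1 + x * C⁻¹ * xᴴ) * (1 - x * yᴴ)
      = 1 - y * yᴴ + (y - x) * C⁻¹ * (yᴴ - xᴴ) + y * (C * C⁻¹ - 1) * (C * yᴴ - (yᴴ - xᴴ))
          - (y - x) * (C⁻¹ * C - 1) * yᴴ := by simp only [C]; noncomm_ring
    _ = 1 - y * yᴴ + (y - x) * C⁻¹ * (yᴴ - xᴴ) := by
        rw [mul_nonsing_inv _ hC, nonsing_inv_mul _ hC]; noncomm_ring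

lemma sub_mul_inv_one_sub_conjTranspose_mul (hA : IsUnit (1 - x * xᴴ).det)
    (hB : IsUnit (1 - xᴴ * y).det) (hC : IsUnit (1 - xᴴ * x).det)
    (hD : IsUnit (1 - y * xᴴ).det) :
    (y - x) * (1 - xᴴ * y)⁻¹ = (1 - x * xᴴ) * (1 - y * xᴴ)⁻¹ * (y - x) * (1 - xᴴ * x)⁻¹ := by
  set A := 1 - x * xᴴ
  set B := 1 - xᴴ * y
  set D := 1 - y * xᴴ
  calc (y - x) * B⁻¹ = A * (D⁻¹ * (D * (A⁻¹ * ((y - x) * B⁻¹)))) := by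
        rw [nonsing_inv_mul_cancel_left _ _ hD, mul_nonsing_inv_cancel_left _ _ hA]
    _ = A * D⁻¹ * (D * A⁻¹ * (y - x)) * B⁻¹ := by simp only [mul_assoc]
    _ = A * D⁻¹ * (y - x) * (1 - xᴴ * x)⁻¹ * (B * B⁻¹) := by
        rw [one_sub_mul_conjTranspose_mul_inv_mul_sub x y hC]; simp only [B, mul_assoc]
    _ = A * D⁻¹ * (y - x) * (1 - xᴴ * x)⁻¹ := by rw [mul_nonsing_inv _ hB, mul_one]

lemma sub_mul_inv_mul_conjTranspose (hA : IsUnit (1 - x * xᴴ).det)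
    (hB : IsUnit (1 - xᴴ * y).det) (hC : IsUnit (1 - xᴴ * x).det)
    (hD : IsUnit (1 - y * xᴴ).det) :
    (y - x) * (1 - xᴴ * y)⁻¹ * (1 - xᴴ * x) * ((y - x) * (1 - xᴴ * y)⁻¹)ᴴ
      = (1 - x * xᴴ) - (1 - x * xᴴ) * ((1 - y * xᴴ)⁻¹ * (1 - y * yᴴ) * (1 - y * xᴴ)⁻¹ᴴ)
          * (1 - x * xᴴ) := by
  have hAH : (1 - x * xᴴ)ᴴ = 1 - x * xᴴ := by simp [conjTranspose_sub]
  have hCH : (1 - xᴴ * x)ᴴ = 1 - xᴴ * x := by simp [conjTranspose_sub]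
  have hDH : (1 - y * xᴴ)⁻¹ᴴ = (1 - x * yᴴ)⁻¹ := by
    simp [conjTranspose_nonsing_inv, conjTranspose_sub]
  have hD' : IsUnit (1 - x * yᴴ).det := by
    simpa [← det_conjTranspose, conjTranspose_sub] using hD.star
  rw [sub_mul_inv_one_sub_conjTranspose_mul x y hA hB hC hD]
  simp only [conjTranspose_mul, conjTranspose_nonsing_inv, hAH, hCH, hDH]
  set A := 1 - x * xᴴ
  set C := 1 - xᴴ * x
  set D := 1 - y * xᴴ
  set D' := 1 - x * yᴴ
  calc A * D⁻¹ * (y - x) * C⁻¹ * C * (C⁻¹ * ((y - x)ᴴ * (D'⁻¹ * A)))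
      = A * D⁻¹ * ((y - x) * (C⁻¹ * C) * C⁻¹ * (y - x)ᴴ) * D'⁻¹ * A := by
        simp only [mul_assoc]
    _ = A * D⁻¹ * (D * A⁻¹ * D' - (1 - y * yᴴ)) * D'⁻¹ * A := by
        rw [nonsing_inv_mul _ hC, mul_one, eq_sub_of_add_eq'
          (one_sub_mul_conjTranspose_mul_inv_mul_one_sub x y hC).symm]
    _ = A * (D⁻¹ * D) * A⁻¹ * (D' * D'⁻¹) * A - A * (D⁻¹ * (1 - y * yᴴ) * D'⁻¹) * A := by
        noncomm_ring
    _ = A - A * (D⁻¹ * (1 - y * yᴴ) * D'⁻¹) * A := by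
        rw [nonsing_inv_mul _ hD, mul_nonsing_inv _ hD', mul_one, mul_one,
          mul_nonsing_inv _ hA, one_mul]

lemma one_sub_siegel_mul_conjTranspose {s t : Matrix n n R} (hs : s * s = 1 - x * xᴴ)
    (hsH : sᴴ = s) (ht : t * t = 1 - xᴴ * x) (htH : tᴴ = t) (hA : IsUnit (1 - x * xᴴ).det)
    (hB : IsUnit (1 - xᴴ * y).det) (hC : IsUnit (1 - xᴴ * x).det)
    (hD : IsUnit (1 - y * xᴴ).det) :
    1 - (s⁻¹ * (y - x) * (1 - xᴴ * y)⁻¹ * t) * (s⁻¹ * (y - x) * (1 - xᴴ * y)⁻¹ * t)ᴴ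
      = s * (1 - y * xᴴ)⁻¹ * (1 - y * yᴴ) * (s * (1 - y * xᴴ)⁻¹)ᴴ := by
  have hs' : IsUnit s.det := isUnit_mul_self_iff.mp (by rwa [← det_mul, hs])
  have hsA : s⁻¹ * (1 - x * xᴴ) = s := by rw [← hs, nonsing_inv_mul_cancel_left _ _ hs']
  have hAs : (1 - x * xᴴ) * s⁻¹ = s := by rw [← hs, mul_nonsing_inv_cancel_right _ _ hs']
  have hgram := sub_mul_inv_mul_conjTranspose x y hA hB hC hD
  set w := (y - x) * (1 - xᴴ * y)⁻¹
  set K := (1 - y * xᴴ)⁻¹ * (1 - y * yᴴ) * (1 - y * xᴴ)⁻¹ᴴ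
  calc 1 - (s⁻¹ * (y - x) * (1 - xᴴ * y)⁻¹ * t) * (s⁻¹ * (y - x) * (1 - xᴴ * y)⁻¹ * t)ᴴ
      = 1 - s⁻¹ * (w * (t * t) * wᴴ) * s⁻¹ := by
        simp only [w, conjTranspose_mul, conjTranspose_nonsing_inv, hsH, htH, mul_assoc]
    _ = 1 - (s⁻¹ * (1 - x * xᴴ)) * s⁻¹ + (s⁻¹ * (1 - x * xᴴ)) * K * ((1 - x * xᴴ) * s⁻¹) := by
        rw [ht, hgram]; noncomm_ring
    _ = s * K * s := by rw [hsA, hAs, mul_nonsing_inv _ hs']; noncomm_ring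
    _ = s * (1 - y * xᴴ)⁻¹ * (1 - y * yᴴ) * (s * (1 - y * xᴴ)⁻¹)ᴴ := by
        simp only [K, conjTranspose_mul, hsH, mul_assoc]

end Matrix

theorem siegel_disk_automorphism_posdef_general {n : ℕ}
    (x y : Matrix (Fin n) (Fin n) ℂ)
    (h1 : (1 - x * xᴴ).PosDef) (h2 : (1 - xᴴ * x).PosDef) (h3 : (1 - y * yᴴ).PosDef)
    (h4 : IsUnit (1 - xᴴ * y)) (h5 : IsUnit (1 - y * xᴴ)) :
    (1 - ((h1.posSemidef.sqrt)⁻¹ * (y - x) * (1 - xᴴ * y)⁻¹ * h2.posSemidef.sqrt) *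
        ((h1.posSemidef.sqrt)⁻¹ * (y - x) * (1 - xᴴ * y)⁻¹ * h2.posSemidef.sqrt)ᴴ).PosDef := by
  have hs := h1.posSemidef.sqrt_mul_self
  rw [one_sub_siegel_mul_conjTranspose x y hs h1.posSemidef.posSemidef_sqrt.isHermitian
    h2.posSemidef.sqrt_mul_self h2.posSemidef.posSemidef_sqrt.isHermitian
    ((isUnit_iff_isUnit_det _).mp h1.isUnit) ((isUnit_iff_isUnit_det _).mp h4)
    ((isUnit_iff_isUnit_det _).mp h2.isUnit) ((isUnit_iff_isUnit_det _).mp h5)]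
  have hM : IsUnit (h1.posSemidef.sqrt * (1 - y * xᴴ)⁻¹) :=
    (isUnit_mul_self_iff.mp (by rw [hs]; exact h1.isUnit)).mul (isUnit_nonsing_inv_iff.mpr h5)
  exact (IsUnit.posDef_star_right_conjugate_iff hM).mpr h3

/-- The Siegel-disk automorphism `φ_x` maps the Siegel disk into the Siegel disk:
`I - φ_x(y) φ_x(y)ᴴ` is positive definite. -/
theorem siegel_disk_automorphism_posdef {n : ℕ} (hn : 0 < n)
    (x y : Matrix (Fin n) (Fin n) ℂ)
    (hxs : xᵀ = x) (hys : yᵀ = y)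
    (h1 : (1 - x * xᴴ).PosDef) (h2 : (1 - xᴴ * x).PosDef) (h3 : (1 - y * yᴴ).PosDef)
    (h4 : IsUnit (1 - xᴴ * y)) (h5 : IsUnit (1 - y * xᴴ)) (h6 : IsUnit (1 - x * yᴴ)) :
    (1 - ((h1.posSemidef.sqrt)⁻¹ * (y - x) * (1 - xᴴ * y)⁻¹ * h2.posSemidef.sqrt) *
        ((h1.posSemidef.sqrt)⁻¹ * (y - x) * (1 - xᴴ * y)⁻¹ * h2.posSemidef.sqrt)ᴴ).PosDef :=
  siegel_disk_automorphism_posdef_general x y h1 h2 h3 h4 h5
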